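/- In misère Partizan Kayles, if the total number of squares in a position G is divisible by 3, then Right wins G when Right moves first (equivalently, Left moving second loses), so o⁻(G) ∈ {R, N}. -/

import Mathlib

/-- Add a strip of length `k` to a position (strips of length 0 are discarded). -/
def addStrip (m : Multiset ℕ) (k : ℕ) : Multiset ℕ := if k = 0 then m else k ::ₘ m

/-- Left removes one square from a strip of length `n ≥ 1`, leaving strips `i` and `n-1-i`. -/
def LeftMove (G G' : Multiset ℕ) : Prop :=
  ∃ n ∈ G, ∃ i, i + 1 ≤ n ∧ G' = addStrip (addStrip (G.erase n) i) (n - 1 - i)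

/-- Right removes two adjacent squares from a strip of length `n ≥ 2`, leaving `i` and `n-2-i`. -/
def RightMove (G G' : Multiset ℕ) : Prop :=
  ∃ n ∈ G, ∃ i, i + 2 ≤ n ∧ G' = addStrip (addStrip (G.erase n) i) (n - 2 - i)

mutual
  /-- Misère play: Left, to move, wins (a player unable to move wins). -/
  inductive LeftWinsMover : Multiset ℕ → Prop
    | cannot (G : Multiset ℕ) : (¬ ∃ G', LeftMove G G') → LeftWinsMover G
    | move (G G' : Multiset ℕ) : LeftMove G G' → LeftWinsWaiter G' → LeftWinsMover G
  /-- Misère play: Left wins with Right to move. -/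
  inductive LeftWinsWaiter : Multiset ℕ → Prop
    | intro (G : Multiset ℕ) : (∃ G', RightMove G G') →
        (∀ G', RightMove G G' → LeftWinsMover G') → LeftWinsWaiter G
end

inductive Outcome | L | N | P | R
  deriving DecidableEq

open Classical in
/-- The misère outcome `o⁻(G)`. -/
noncomputable def outcome (G : Multiset ℕ) : Outcome :=
  if LeftWinsMover G then (if LeftWinsWaiter G then Outcome.L else Outcome.N)
  else (if LeftWinsWaiter G then Outcome.P else Outcome.R)

/-- The partial order on outcomes: `L` greatest, `R` least, `N` and `P` incomparable. -/
def Outcome.le (a b : Outcome) : Prop := a = b ∨ a = Outcome.R ∨ b = Outcome.L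

/-- `pos k j` is the position `kS₁ + jS₂`. -/
def pos (k j : ℕ) : Multiset ℕ := Multiset.replicate k 1 + Multiset.replicate j 2

/-!
A Left move lowers the number of squares by one and a Right move by two. If Right, to move,
faces a count `≡ 0 mod 3` and moves, Left faces a positive count `≡ 1 mod 3`, so Left is not
stuck and every Left move restores `≡ 0 mod 3`. As the count decreases, Right is eventually
the player unable to move, which in misère play means Right wins.
-/

lemma sum_addStrip (m : Multiset ℕ) (k : ℕ) : (addStrip m k).sum = m.sum + k := by
  unfold addStrip
  split_ifs with hk <;> simp [hk, add_comm]

lemma sum_addStrip_addStrip_erase {G : Multiset ℕ} {n : ℕ} (hn : n ∈ G) (i j : ℕ) :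
    (addStrip (addStrip (G.erase n) i) j).sum + n = G.sum + i + j := by
  rw [sum_addStrip, sum_addStrip, ← Multiset.sum_erase hn]
  ring

lemma LeftMove.sum_add_one {G G' : Multiset ℕ} (h : LeftMove G G') : G'.sum + 1 = G.sum := by
  obtain ⟨n, hn, i, hi, rfl⟩ := h
  have := sum_addStrip_addStrip_erase hn i (n - 1 - i)
  omega

lemma RightMove.sum_add_two {G G' : Multiset ℕ} (h : RightMove G G') : G'.sum + 2 = G.sum := by
  obtain ⟨n, hn, i, hi, rfl⟩ := h
  have := sum_addStrip_addStrip_erase hn i (n - 2 - i)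
  omega

lemma exists_leftMove_of_sum_ne_zero {G : Multiset ℕ} (h : G.sum ≠ 0) : ∃ G', LeftMove G G' := by
  obtain ⟨n, hn, hn0⟩ : ∃ n ∈ G, n ≠ 0 := by
    by_contra! hall_zero
    exact h (Multiset.sum_eq_zero hall_zero)
  exact ⟨_, n, hn, 0, by omega, rfl⟩

theorem not_leftWinsWaiter_of_sum_mod_three_eq_zero {G : Multiset ℕ} (h : G.sum % 3 = 0) :
    ¬ LeftWinsWaiter G := by
  induction hs : G.sum using Nat.strong_induction_on generalizing G with
  | _ s ih =>
    rintro ⟨_, ⟨G₁, hR⟩, hLeftWins⟩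
    have hs₁ := hR.sum_add_two
    cases hLeftWins G₁ hR with
    | cannot _ hstuck => exact hstuck (exists_leftMove_of_sum_ne_zero (by omega))
    | move _ G₂ hL hW₂ =>
      have hs₂ := hL.sum_add_one
      exact ih G₂.sum (by omega) (by omega) rfl hW₂

lemma outcome_eq_R_or_N_of_not_leftWinsWaiter {G : Multiset ℕ} (h : ¬ LeftWinsWaiter G) :
    outcome G = Outcome.R ∨ outcome G = Outcome.N := by
  by_cases hM : LeftWinsMover G <;> simp [outcome, hM, h]

theorem kayles_sum_zero_mod_three (G : Multiset ℕ) (hG : 0 ∉ G)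
    (h : G.sum % 3 = 0) :
    ¬ LeftWinsWaiter G ∧ (outcome G = Outcome.R ∨ outcome G = Outcome.N) :=
  have hW := not_leftWinsWaiter_of_sum_mod_three_eq_zero h
  ⟨hW, outcome_eq_R_or_N_of_not_leftWinsWaiter hW⟩
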